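/- Let M ∈ ℝ^{m×n} be partitioned in blocks, let G ∈ ℝ^{m×s}, S ∈ ℝ^{s×n} satisfy ‖M − GS‖₂ ≤ e_s, let G_A be the top s rows of G and S_A the first s columns of S. Assume: (1) σ_s(GS) > 0; (2) there is γ ≥ 1 with σ_s(G)·σ_s(S) = σ_s(GS)/γ; (3) there is β ≥ 1 with σ_s(G_A) ≥ σ_s(G)/β and σ_s(S_A) ≥ σ_s(S)/β. Then (σ_s(M) − e_s)/(β²γ) − e_s − σ_{s+1}(M) ≤ σ_s(A_lg), where A_lg is the top-left s×s block of the best rank-s approximation M_lg of M. -/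

import Mathlib

open Matrix

/-- `sv A k` is the `k`-th largest singular value (1-indexed) of the real matrix `A`,
computed as the `k`-th largest square root of an eigenvalue of `Aᵀ * A`. -/
noncomputable def sv {p q : ℕ} (A : Matrix (Fin p) (Fin q) ℝ) (k : ℕ) : ℝ :=
  if h : q - k < q then
    (fun i : Fin q => Real.sqrt ((Matrix.isHermitian_conjTranspose_mul_self A).eigenvalues i))
      (Tuple.sort (fun i : Fin q =>
        Real.sqrt ((Matrix.isHermitian_conjTranspose_mul_self A).eigenvalues i)) ⟨q - k, h⟩)
  else 0

/-!
Weyl's inequality `σ_k(M) ≤ σ_k(B) + ‖M - B‖` applied to `B = G S` gives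
`σ_s(G S) ≥ σ_s(M) - e_s`. By (2), (3) and `σ_min(P Q) ≥ σ_min(P) σ_min(Q)`,
`σ_s(G_A S_A) ≥ σ_s(G S) / (β²γ)`. Weyl's inequality once more, on the `s × s` blocks, gives
`σ_s(G_A S_A) ≤ σ_s(A_lg) + ‖G_A S_A - A_lg‖`, and `G_A S_A - A_lg` is a block of `G S - M_lg`,
whose norm is at most `‖G S - M‖ + ‖M - M_lg‖ ≤ e_s + σ_{s+1}(M)`.

Singular values are read off an orthonormal eigenbasis `(e_j)` of `Aᵀ A`:
`‖A x‖² = ∑ σ_j² ⟪e_j, x⟫²`; in particular `σ_1` is the spectral norm. Weyl's inequality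
comes from a dimension count: some `x ≠ 0` lies both in the span of the right singular vectors
of `M` for `σ_1, …, σ_k` and in that of the right singular vectors of `B` for `σ_k, …, σ_q`.
-/

open RealInnerProductSpace
open scoped Matrix.Norms.L2Operator

lemma OrthonormalBasis.sum_sq_repr {ι E : Type*} [Fintype ι] [NormedAddCommGroup E]
    [InnerProductSpace ℝ E] (b : OrthonormalBasis ι ℝ E) (x : E) :
    ∑ j, b.repr x j ^ 2 = ‖x‖ ^ 2 := by
  simp only [b.repr_apply_apply, b.sum_sq_inner_right]

section L2OpNorm

variable {𝕜 : Type*} [RCLike 𝕜] {l m n o : Type*} [Fintype l] [Fintype m] [Fintype n]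
  [Fintype o] [DecidableEq n]

lemma l2_opNorm_one_le : ‖(1 : Matrix n n 𝕜)‖ ≤ 1 := by
  rw [← diagonal_one, l2_opNorm_diagonal]
  exact pi_norm_le_iff_of_nonneg zero_le_one |>.2 fun _ => by simp

lemma l2_opNorm_le_one_of_conjTranspose_mul_self_eq_one {Q : Matrix m n 𝕜} (hQ : Qᴴ * Q = 1) :
    ‖Q‖ ≤ 1 := by
  have h := l2_opNorm_conjTranspose_mul_self Q
  rw [hQ] at h
  nlinarith [norm_nonneg Q, l2_opNorm_one_le (n := n) (𝕜 := 𝕜)]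

lemma l2_opNorm_one_submatrix_id_le [DecidableEq o] {g : o → n} (hg : Function.Injective g) :
    ‖(1 : Matrix n n 𝕜).submatrix id g‖ ≤ 1 := by
  refine l2_opNorm_le_one_of_conjTranspose_mul_self_eq_one ?_
  rw [conjTranspose_submatrix, conjTranspose_one, ← submatrix_mul _ _ _ _ _ Function.bijective_id,
    Matrix.one_mul, submatrix_one g hg]

lemma l2_opNorm_submatrix_le [DecidableEq m] [DecidableEq l] [DecidableEq o] (A : Matrix m n 𝕜)
    {f : l → m} {g : o → n} (hf : Function.Injective f) (hg : Function.Injective g) :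
    ‖A.submatrix f g‖ ≤ ‖A‖ := by
  have hA : A.submatrix f g =
      ((1 : Matrix m m 𝕜).submatrix id f)ᴴ * A * (1 : Matrix n n 𝕜).submatrix id g := by
    ext i j
    simp [Matrix.mul_apply, Matrix.one_apply]
  calc ‖A.submatrix f g‖
      ≤ ‖((1 : Matrix m m 𝕜).submatrix id f)ᴴ‖ * ‖A‖ * ‖(1 : Matrix n n 𝕜).submatrix id g‖ := by
        rw [hA]
        exact (l2_opNorm_mul _ _).trans (by gcongr; exact l2_opNorm_mul _ _)
    _ ≤ 1 * ‖A‖ * 1 := by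
        rw [l2_opNorm_conjTranspose]
        gcongr
        exacts [l2_opNorm_one_submatrix_id_le hf, l2_opNorm_one_submatrix_id_le hg]
    _ = ‖A‖ := by ring

end L2OpNorm

section SingularValues

variable {p q : ℕ}

noncomputable def gramBasis (A : Matrix (Fin p) (Fin q) ℝ) :
    OrthonormalBasis (Fin q) ℝ (EuclideanSpace ℝ (Fin q)) :=
  (isHermitian_conjTranspose_mul_self A).eigenvectorBasis

noncomputable def svUnsorted (A : Matrix (Fin p) (Fin q) ℝ) (j : Fin q) : ℝ :=
  √((isHermitian_conjTranspose_mul_self A).eigenvalues j)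

/-- Lists the singular values in increasing order, so that `sv A k` sits at position `q - k`. -/
noncomputable def svOrder (A : Matrix (Fin p) (Fin q) ℝ) : Equiv.Perm (Fin q) :=
  Tuple.sort (svUnsorted A)

lemma sv_eq_svUnsorted (A : Matrix (Fin p) (Fin q) ℝ) {k : ℕ} (hk : 1 ≤ k) (hq : 0 < q) :
    sv A k = svUnsorted A (svOrder A ⟨q - k, by omega⟩) := by
  rw [sv, dif_pos (by omega)]
  rfl

lemma svUnsorted_nonneg (A : Matrix (Fin p) (Fin q) ℝ) (j : Fin q) : 0 ≤ svUnsorted A j :=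
  Real.sqrt_nonneg _

lemma sv_nonneg (A : Matrix (Fin p) (Fin q) ℝ) (k : ℕ) : 0 ≤ sv A k := by
  unfold sv
  split_ifs
  exacts [Real.sqrt_nonneg _, le_rfl]

lemma sv_antitone (A : Matrix (Fin p) (Fin q) ℝ) {k l : ℕ} (hk : 1 ≤ k) (hkl : k ≤ l) :
    sv A l ≤ sv A k := by
  rcases Nat.eq_zero_or_pos q with rfl | hq
  · simp [sv]
  · rw [sv_eq_svUnsorted A (hk.trans hkl) hq, sv_eq_svUnsorted A hk hq]
    exact Tuple.monotone_sort (svUnsorted A) (Fin.mk_le_mk.2 (by omega))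

lemma toEuclideanLin_conjTranspose_mul_self_gramBasis (A : Matrix (Fin p) (Fin q) ℝ) (j : Fin q) :
    toEuclideanLin (Aᴴ * A) (gramBasis A j) = svUnsorted A j ^ 2 • gramBasis A j := by
  rw [svUnsorted, Real.sq_sqrt ((posSemidef_conjTranspose_mul_self A).eigenvalues_nonneg j),
    toLpLin_apply, gramBasis, IsHermitian.mulVec_eigenvectorBasis]
  rfl

lemma norm_toEuclideanLin_sq (A : Matrix (Fin p) (Fin q) ℝ) (x : EuclideanSpace ℝ (Fin q)) :
    ‖toEuclideanLin A x‖ ^ 2 = ∑ j, svUnsorted A j ^ 2 * (gramBasis A).repr x j ^ 2 := by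
  set b := gramBasis A
  calc ‖toEuclideanLin A x‖ ^ 2 = ⟪toEuclideanLin (Aᴴ * A) x, x⟫ := by
        rw [← real_inner_self_eq_norm_sq, ← LinearMap.adjoint_inner_left,
          ← toEuclideanLin_conjTranspose_eq_adjoint, toLpLin_mul_same, LinearMap.comp_apply]
    _ = ⟪∑ j, (b.repr x j * svUnsorted A j ^ 2) • b j, x⟫ := by
        congr 1
        conv_lhs => rw [← b.sum_repr x]
        simp only [map_sum, map_smul, b, toEuclideanLin_conjTranspose_mul_self_gramBasis,
          smul_smul]
    _ = _ := by
        simp only [sum_inner, real_inner_smul_left, ← b.repr_apply_apply]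
        exact Finset.sum_congr rfl fun j _ => by ring

lemma norm_toEuclideanLin_le_of_repr_ne_zero (A : Matrix (Fin p) (Fin q) ℝ)
    {x : EuclideanSpace ℝ (Fin q)} {c : ℝ} (hc : 0 ≤ c)
    (h : ∀ j, (gramBasis A).repr x j ≠ 0 → svUnsorted A j ≤ c) :
    ‖toEuclideanLin A x‖ ≤ c * ‖x‖ := by
  rw [← pow_le_pow_iff_left₀ (norm_nonneg _) (by positivity) two_ne_zero, mul_pow,
    norm_toEuclideanLin_sq, ← (gramBasis A).sum_sq_repr, Finset.mul_sum]
  refine Finset.sum_le_sum fun j _ => ?_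
  by_cases hj : (gramBasis A).repr x j = 0
  · simp [hj]
  · have := h j hj
    have := svUnsorted_nonneg A j
    gcongr

lemma le_norm_toEuclideanLin_of_repr_ne_zero (A : Matrix (Fin p) (Fin q) ℝ)
    {x : EuclideanSpace ℝ (Fin q)} {c : ℝ} (hc : 0 ≤ c)
    (h : ∀ j, (gramBasis A).repr x j ≠ 0 → c ≤ svUnsorted A j) :
    c * ‖x‖ ≤ ‖toEuclideanLin A x‖ := by
  rw [← pow_le_pow_iff_left₀ (by positivity) (norm_nonneg _) two_ne_zero, mul_pow,
    norm_toEuclideanLin_sq, ← (gramBasis A).sum_sq_repr, Finset.mul_sum]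
  refine Finset.sum_le_sum fun j _ => ?_
  by_cases hj : (gramBasis A).repr x j = 0
  · simp [hj]
  · have := h j hj
    gcongr

/-- `x` lies in the span of the right singular vectors of `A` for `σ_1, …, σ_k`. -/
def MemTopSingularSpace (A : Matrix (Fin p) (Fin q) ℝ) (k : ℕ) (x : EuclideanSpace ℝ (Fin q)) :
    Prop :=
  ∀ i : Fin q, (i : ℕ) < q - k → (gramBasis A).repr x (svOrder A i) = 0

/-- `x` lies in the span of the right singular vectors of `A` for `σ_k, …, σ_q`. -/
def MemBottomSingularSpace (A : Matrix (Fin p) (Fin q) ℝ) (k : ℕ)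
    (x : EuclideanSpace ℝ (Fin q)) : Prop :=
  ∀ i : Fin q, q - k < (i : ℕ) → (gramBasis A).repr x (svOrder A i) = 0

lemma MemTopSingularSpace.sv_mul_norm_le {A : Matrix (Fin p) (Fin q) ℝ} {k : ℕ}
    {x : EuclideanSpace ℝ (Fin q)} (hx : MemTopSingularSpace A k x) (hk : 1 ≤ k) (hkq : k ≤ q) :
    sv A k * ‖x‖ ≤ ‖toEuclideanLin A x‖ := by
  refine le_norm_toEuclideanLin_of_repr_ne_zero A (sv_nonneg A k) fun j hj => ?_
  obtain ⟨i, rfl⟩ := (svOrder A).surjective j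
  rw [sv_eq_svUnsorted A hk (by omega)]
  exact Tuple.monotone_sort (svUnsorted A)
    (show q - k ≤ (i : ℕ) from not_lt.1 fun h => hj (hx i h))

lemma MemBottomSingularSpace.norm_le_sv_mul {A : Matrix (Fin p) (Fin q) ℝ} {k : ℕ}
    {x : EuclideanSpace ℝ (Fin q)} (hx : MemBottomSingularSpace A k x) (hk : 1 ≤ k)
    (hkq : k ≤ q) : ‖toEuclideanLin A x‖ ≤ sv A k * ‖x‖ := by
  refine norm_toEuclideanLin_le_of_repr_ne_zero A (sv_nonneg A k) fun j hj => ?_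
  obtain ⟨i, rfl⟩ := (svOrder A).surjective j
  rw [sv_eq_svUnsorted A hk (by omega)]
  exact Tuple.monotone_sort (svUnsorted A)
    (show (i : ℕ) ≤ q - k from not_lt.1 fun h => hj (hx i h))

lemma norm_toEuclideanLin_le_sv_one (A : Matrix (Fin p) (Fin q) ℝ)
    (x : EuclideanSpace ℝ (Fin q)) : ‖toEuclideanLin A x‖ ≤ sv A 1 * ‖x‖ := by
  rcases Nat.eq_zero_or_pos q with rfl | hq
  · simp [Subsingleton.elim x 0]
  · exact MemBottomSingularSpace.norm_le_sv_mul (fun i hi => by omega) le_rfl hq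

lemma sv_mul_norm_le_norm_toEuclideanLin (A : Matrix (Fin p) (Fin q) ℝ)
    (x : EuclideanSpace ℝ (Fin q)) : sv A q * ‖x‖ ≤ ‖toEuclideanLin A x‖ := by
  rcases Nat.eq_zero_or_pos q with rfl | hq
  · simp [sv]
  · exact MemTopSingularSpace.sv_mul_norm_le (fun i hi => by omega) hq le_rfl

lemma exists_norm_eq_sv (A : Matrix (Fin p) (Fin q) ℝ) {k : ℕ} (hk : 1 ≤ k) (hkq : k ≤ q) :
    ∃ x : EuclideanSpace ℝ (Fin q), ‖x‖ = 1 ∧ ‖toEuclideanLin A x‖ = sv A k := by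
  set j := svOrder A ⟨q - k, by omega⟩
  refine ⟨gramBasis A j, (gramBasis A).norm_eq_one j, ?_⟩
  rw [sv_eq_svUnsorted A hk (by omega), ← sq_eq_sq₀ (norm_nonneg _) (svUnsorted_nonneg A _),
    norm_toEuclideanLin_sq, Finset.sum_eq_single j]
  · simp [j]
  · intro i _ hi
    simp [hi]
  · simp

lemma sv_one_eq_l2_opNorm (A : Matrix (Fin p) (Fin q) ℝ) : sv A 1 = ‖A‖ := by
  refine le_antisymm ?_ (ContinuousLinearMap.opNorm_le_bound _ (sv_nonneg A 1)
    (norm_toEuclideanLin_le_sv_one A))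
  rcases Nat.eq_zero_or_pos q with rfl | hq
  · simp [sv]
  · obtain ⟨x, hx, hAx⟩ := exists_norm_eq_sv A le_rfl hq
    calc sv A 1 = ‖toEuclideanLin A x‖ := hAx.symm
      _ ≤ ‖A‖ * ‖x‖ := l2_opNorm_mulVec A x
      _ = ‖A‖ := by rw [hx, mul_one]

lemma exists_ne_zero_memTopSingularSpace_memBottomSingularSpace
    (A B : Matrix (Fin p) (Fin q) ℝ) {k : ℕ} (hk : 1 ≤ k) (hkq : k ≤ q) :
    ∃ x, x ≠ 0 ∧ MemTopSingularSpace A k x ∧ MemBottomSingularSpace B k x := by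
  let coord (b : OrthonormalBasis (Fin q) ℝ (EuclideanSpace ℝ (Fin q))) (j : Fin q) :
      EuclideanSpace ℝ (Fin q) →ₗ[ℝ] ℝ :=
    (EuclideanSpace.proj j).toLinearMap ∘ₗ b.repr.toLinearMap
  -- the `(q - k) + (k - 1) < q` coordinates that have to vanish
  let f : EuclideanSpace ℝ (Fin q) →ₗ[ℝ] (Fin (q - k) → ℝ) × (Fin (k - 1) → ℝ) :=
    (LinearMap.pi fun i => coord (gramBasis A) (svOrder A (Fin.castLE (by omega) i))).prod
      (LinearMap.pi fun i => coord (gramBasis B) (svOrder B ⟨q - k + 1 + i, by omega⟩))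
  obtain ⟨x, hx, hx0⟩ := Submodule.exists_mem_ne_zero_of_ne_bot
    (LinearMap.ker_ne_bot_of_finrank_lt (f := f) (by simp; omega))
  rw [LinearMap.mem_ker] at hx
  refine ⟨x, hx0, fun i hi => ?_, fun i hi => ?_⟩
  · simpa [f, coord] using congr_fun (congrArg Prod.fst hx) ⟨i, hi⟩
  · have hi' : (⟨q - k + 1 + (i - (q - k + 1)), by omega⟩ : Fin q) = i := Fin.ext (by simp; omega)
    simpa [f, coord, hi'] using congr_fun (congrArg Prod.snd hx) ⟨i - (q - k + 1), by omega⟩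

theorem sv_le_sv_add_l2_opNorm_sub (M B : Matrix (Fin p) (Fin q) ℝ) {k : ℕ} (hk : 1 ≤ k)
    (hkq : k ≤ q) : sv M k ≤ sv B k + ‖M - B‖ := by
  obtain ⟨x, hx0, hxM, hxB⟩ :=
    exists_ne_zero_memTopSingularSpace_memBottomSingularSpace M B hk hkq
  have hMB : toEuclideanLin M x = toEuclideanLin B x + toEuclideanLin (M - B) x := by simp
  refine le_of_mul_le_mul_right ?_ (norm_pos_iff.2 hx0)
  calc sv M k * ‖x‖ ≤ ‖toEuclideanLin M x‖ := hxM.sv_mul_norm_le hk hkq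
    _ ≤ ‖toEuclideanLin B x‖ + ‖toEuclideanLin (M - B) x‖ := hMB ▸ norm_add_le _ _
    _ ≤ sv B k * ‖x‖ + ‖M - B‖ * ‖x‖ :=
      add_le_add (hxB.norm_le_sv_mul hk hkq) (l2_opNorm_mulVec _ x)
    _ = (sv B k + ‖M - B‖) * ‖x‖ := by ring

theorem sv_mul_sv_le_sv_mul {r : ℕ} (P : Matrix (Fin p) (Fin r) ℝ)
    (Q : Matrix (Fin r) (Fin q) ℝ) : sv P r * sv Q q ≤ sv (P * Q) q := by
  rcases Nat.eq_zero_or_pos q with rfl | hq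
  · simp [sv]
  obtain ⟨x, hx, hPQx⟩ := exists_norm_eq_sv (P * Q) hq le_rfl
  calc sv P r * sv Q q = sv P r * (sv Q q * ‖x‖) := by rw [hx, mul_one]
    _ ≤ sv P r * ‖toEuclideanLin Q x‖ :=
      mul_le_mul_of_nonneg_left (sv_mul_norm_le_norm_toEuclideanLin Q x) (sv_nonneg P r)
    _ ≤ ‖toEuclideanLin P (toEuclideanLin Q x)‖ := sv_mul_norm_le_norm_toEuclideanLin P _
    _ = sv (P * Q) q := by rw [← hPQx, toLpLin_mul_same, LinearMap.comp_apply]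

def rectDiagonal (p : ℕ) {q : ℕ} (d : Fin q → ℝ) : Matrix (Fin p) (Fin q) ℝ :=
  of fun i j => if (i : ℕ) = j then d j else 0

lemma l2_opNorm_rectDiagonal_le (d : Fin q → ℝ) : ‖rectDiagonal p d‖ ≤ ‖d‖ := by
  have hone : rectDiagonal p (1 : Fin q → ℝ) = (1 : Matrix (Fin (p + q)) (Fin (p + q)) ℝ).submatrix
      (Fin.castLE (Nat.le_add_right p q)) (Fin.castLE (Nat.le_add_left q p)) := by
    ext i j
    simp [rectDiagonal, one_apply, Fin.ext_iff]
  have hd : rectDiagonal p d = rectDiagonal p (1 : Fin q → ℝ) * diagonal d := by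
    ext i j
    simp [rectDiagonal, mul_diagonal]
  calc ‖rectDiagonal p d‖ ≤ ‖rectDiagonal p (1 : Fin q → ℝ)‖ * ‖diagonal d‖ :=
        hd ▸ l2_opNorm_mul _ _
    _ ≤ 1 * ‖d‖ := by
        rw [l2_opNorm_diagonal, hone]
        gcongr
        exact (l2_opNorm_submatrix_le _ (Fin.castLE_injective _) (Fin.castLE_injective _)).trans
          l2_opNorm_one_le
    _ = ‖d‖ := one_mul _

theorem l2_opNorm_sub_truncatedSVD_le {s : ℕ} (M : Matrix (Fin p) (Fin q) ℝ)
    (U : Matrix (Fin p) (Fin p) ℝ) (hU : Uᵀ * U = 1)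
    (V : Matrix (Fin q) (Fin q) ℝ) (hV : Vᵀ * V = 1)
    (hSVD : M = U * (of fun (i : Fin p) (j : Fin q) =>
      if (i : ℕ) = (j : ℕ) then sv M ((i : ℕ) + 1) else 0) * Vᵀ)
    (Mlg : Matrix (Fin p) (Fin q) ℝ)
    (hMlg : Mlg = U * (of fun (i : Fin p) (j : Fin q) =>
      if (i : ℕ) = (j : ℕ) ∧ (i : ℕ) < s then sv M ((i : ℕ) + 1) else 0) * Vᵀ) :
    ‖M - Mlg‖ ≤ sv M (s + 1) := by
  set d : Fin q → ℝ := fun j => if (j : ℕ) < s then 0 else sv M (j + 1)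
  have hdiff : M - Mlg = U * rectDiagonal p d * Vᵀ := by
    rw [hSVD, hMlg, ← Matrix.sub_mul, ← Matrix.mul_sub]
    congr 2
    ext i j
    simp only [rectDiagonal, d, Matrix.sub_apply, of_apply]
    by_cases hij : (i : ℕ) = j
    · by_cases hj : (j : ℕ) < s <;> simp [hij, hj]
    · simp [hij]
  have hd : ‖d‖ ≤ sv M (s + 1) := by
    refine pi_norm_le_iff_of_nonneg (sv_nonneg M _) |>.2 fun j => ?_
    simp only [d]
    split_ifs with hj
    · simpa using sv_nonneg M _
    · rw [Real.norm_of_nonneg (sv_nonneg M _)]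
      exact sv_antitone M (by omega) (by omega)
  have hUn : ‖U‖ ≤ 1 := l2_opNorm_le_one_of_conjTranspose_mul_self_eq_one hU
  have hVn : ‖Vᵀ‖ ≤ 1 := by
    rw [← conjTranspose_eq_transpose_of_trivial, l2_opNorm_conjTranspose]
    exact l2_opNorm_le_one_of_conjTranspose_mul_self_eq_one hV
  calc ‖M - Mlg‖ ≤ ‖U‖ * ‖rectDiagonal p d‖ * ‖Vᵀ‖ := by
        rw [hdiff]
        exact (l2_opNorm_mul _ _).trans (by gcongr; exact l2_opNorm_mul _ _)
    _ ≤ 1 * ‖d‖ * 1 := by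
        gcongr
        exact l2_opNorm_rectDiagonal_le d
    _ ≤ sv M (s + 1) := by simpa using hd

end SingularValues
theorem stmt6_general (m n s : ℕ) (hs : 1 ≤ s)
    (M : Matrix (Fin (s + m)) (Fin (s + n)) ℝ)
    (G : Matrix (Fin (s + m)) (Fin s) ℝ) (S : Matrix (Fin s) (Fin (s + n)) ℝ)
    (es : ℝ) (hes : sv (M - G * S) 1 ≤ es)
    (GA : Matrix (Fin s) (Fin s) ℝ) (hGAdef : GA = G.submatrix (Fin.castAdd m) id)
    (SA : Matrix (Fin s) (Fin s) ℝ) (hSAdef : SA = S.submatrix id (Fin.castAdd n))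
    (γ : ℝ) (hγ : 1 ≤ γ) (h2 : sv G s * sv S s = sv (G * S) s / γ)
    (β : ℝ) (hβ : 1 ≤ β) (h3G : sv G s / β ≤ sv GA s) (h3S : sv S s / β ≤ sv SA s)
    -- the (full) SVD of M:
    (U : Matrix (Fin (s + m)) (Fin (s + m)) ℝ) (hU : Uᵀ * U = 1)
    (V : Matrix (Fin (s + n)) (Fin (s + n)) ℝ) (hV : Vᵀ * V = 1)
    (hSVD : M = U * (Matrix.of fun (i : Fin (s + m)) (j : Fin (s + n)) =>
      if (i : ℕ) = (j : ℕ) then sv M ((i : ℕ) + 1) else 0) * Vᵀ)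
    -- the best rank-s approximation of M, by truncating its SVD:
    (Mlg : Matrix (Fin (s + m)) (Fin (s + n)) ℝ)
    (hMlg : Mlg = U * (Matrix.of fun (i : Fin (s + m)) (j : Fin (s + n)) =>
      if (i : ℕ) = (j : ℕ) ∧ (i : ℕ) < s then sv M ((i : ℕ) + 1) else 0) * Vᵀ)
    (Alg : Matrix (Fin s) (Fin s) ℝ)
    (hAlg : Alg = Mlg.submatrix (Fin.castAdd m) (Fin.castAdd n)) :
    (sv M s - es) / (β ^ 2 * γ) - es - sv M (s + 1) ≤ sv Alg s := by
  rw [sv_one_eq_l2_opNorm, norm_sub_rev] at hes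
  have hblock : GA * SA - Alg = (G * S - Mlg).submatrix (Fin.castAdd m) (Fin.castAdd n) := by
    ext i j
    simp [hAlg, hGAdef, hSAdef, Matrix.mul_apply]
  have hblock_le : ‖GA * SA - Alg‖ ≤ es + sv M (s + 1) := calc
    ‖GA * SA - Alg‖ ≤ ‖G * S - Mlg‖ :=
      hblock ▸ l2_opNorm_submatrix_le _ (Fin.castAdd_injective s m) (Fin.castAdd_injective s n)
    _ ≤ ‖G * S - M‖ + ‖M - Mlg‖ := norm_sub_le_norm_sub_add_norm_sub _ _ _
    _ ≤ es + sv M (s + 1) :=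
      add_le_add hes (l2_opNorm_sub_truncatedSVD_le M U hU V hV hSVD Mlg hMlg)
  have hM : sv M s - es ≤ sv (G * S) s := by
    linarith [sv_le_sv_add_l2_opNorm_sub M (G * S) hs (by omega), norm_sub_rev M (G * S)]
  have hA : sv (GA * SA) s ≤ sv Alg s + ‖GA * SA - Alg‖ := sv_le_sv_add_l2_opNorm_sub _ _ hs le_rfl
  have hprod : sv (G * S) s / (β ^ 2 * γ) ≤ sv (GA * SA) s := calc
    sv (G * S) s / (β ^ 2 * γ) = (sv G s / β) * (sv S s / β) := by
      rw [div_mul_div_comm, h2]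
      ring
    _ ≤ sv GA s * sv SA s :=
      mul_le_mul h3G h3S (div_nonneg (sv_nonneg S s) (by linarith)) (sv_nonneg GA s)
    _ ≤ sv (GA * SA) s := sv_mul_sv_le_sv_mul GA SA
  have hdiv : (sv M s - es) / (β ^ 2 * γ) ≤ sv (G * S) s / (β ^ 2 * γ) :=
    div_le_div_of_nonneg_right hM (mul_nonneg (sq_nonneg β) (by linarith))
  linarith

/-- under assumptions (1)–(3) on the approximate rank-`s`
decomposition `M ≈ G * S`,
`(σ_s(M) − e_s)/(β²γ) − e_s − σ_{s+1}(M) ≤ σ_s(A_lg)`, where `A_lg` is the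
top-left `s×s` block of the best rank-`s` approximation `M_lg` of `M`
(given by the truncated SVD of `M = U Σ Vᵀ`). -/
theorem stmt6 (m n s : ℕ) (hs : 1 ≤ s) (hm : 1 ≤ m) (hn : 1 ≤ n)
    (M : Matrix (Fin (s + m)) (Fin (s + n)) ℝ)
    (G : Matrix (Fin (s + m)) (Fin s) ℝ) (S : Matrix (Fin s) (Fin (s + n)) ℝ)
    (es : ℝ) (hes : sv (M - G * S) 1 ≤ es)
    (GA : Matrix (Fin s) (Fin s) ℝ) (hGAdef : GA = G.submatrix (Fin.castAdd m) id)
    (SA : Matrix (Fin s) (Fin s) ℝ) (hSAdef : SA = S.submatrix id (Fin.castAdd n))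
    (h1 : 0 < sv (G * S) s)
    (γ : ℝ) (hγ : 1 ≤ γ) (h2 : sv G s * sv S s = sv (G * S) s / γ)
    (β : ℝ) (hβ : 1 ≤ β) (h3G : sv G s / β ≤ sv GA s) (h3S : sv S s / β ≤ sv SA s)
    -- the (full) SVD of M:
    (U : Matrix (Fin (s + m)) (Fin (s + m)) ℝ) (hU : Uᵀ * U = 1)
    (V : Matrix (Fin (s + n)) (Fin (s + n)) ℝ) (hV : Vᵀ * V = 1)
    (hSVD : M = U * (Matrix.of fun (i : Fin (s + m)) (j : Fin (s + n)) =>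
      if (i : ℕ) = (j : ℕ) then sv M ((i : ℕ) + 1) else 0) * Vᵀ)
    -- the best rank-s approximation of M, by truncating its SVD:
    (Mlg : Matrix (Fin (s + m)) (Fin (s + n)) ℝ)
    (hMlg : Mlg = U * (Matrix.of fun (i : Fin (s + m)) (j : Fin (s + n)) =>
      if (i : ℕ) = (j : ℕ) ∧ (i : ℕ) < s then sv M ((i : ℕ) + 1) else 0) * Vᵀ)
    (Alg : Matrix (Fin s) (Fin s) ℝ)
    (hAlg : Alg = Mlg.submatrix (Fin.castAdd m) (Fin.castAdd n)) :
    (sv M s - es) / (β ^ 2 * γ) - es - sv M (s + 1) ≤ sv Alg s :=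
  stmt6_general m n s hs M G S es hes GA hGAdef SA hSAdef γ hγ h2 β hβ h3G h3S U hU V hV hSVD Mlg
    hMlg Alg hAlg
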